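/- arXiv:2405.08939 — 5 statements merged into one kernel-verified Lean document; each statement's English description precedes it below -/
import Mathlib

section
/- If a distribution p on {1,...,N}³ satisfies the Finner inequality p(a,b,c) ≤ √(p(A=a)·p(B=b)·p(C=c)) and is fully symmetric, then p(A=B=C) = Σ_k p(k,k,k) ≤ 1/√N. In particular for N = 4, p(A=B=C) ≤ 1/2. -/
/-!
Relabelling outcomes by a transposition shows that all one-party marginals coincide, so each
equals `1/N`, and the party symmetries identify the `B`- and `C`-marginals with the `A`-marginal.
The Finner inequality then bounds every diagonal entry by `√(1/N³)`, and summing the `N` of them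
gives `N · N^{-3/2} = 1/√N`.
-/

open Finset

section Marginals

variable {α M : Type*} [Fintype α]

theorem sum_sum_eq_of_perm_invariant [DecidableEq α] [AddCommMonoid M] {p : α → α → α → M}
    (hp : ∀ (σ : Equiv.Perm α) a b c, p (σ a) (σ b) (σ c) = p a b c) (a a' : α) :
    ∑ b, ∑ c, p a b c = ∑ b, ∑ c, p a' b c := by
  let σ := Equiv.swap a a'
  calc ∑ b, ∑ c, p a b c = ∑ b, ∑ c, p a' (σ b) (σ c) := by
        simp_rw [← hp σ a, σ, Equiv.swap_apply_left]
    _ = ∑ b, ∑ c, p a' b c :=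
        Fintype.sum_equiv σ _ _ fun b => Equiv.sum_comp σ (p a' (σ b))

theorem eq_one_div_card_of_sum_eq_one {m : α → ℝ} (hm : ∀ a a', m a = m a')
    (hsum : ∑ a, m a = 1) (a : α) : m a = 1 / Fintype.card α := by
  refine eq_one_div_of_mul_eq_one_left ?_
  rw [← hsum, mul_comm, ← nsmul_eq_mul, ← card_univ, ← sum_const]
  exact sum_congr rfl fun a' _ => hm a a'

theorem sum_sum_middle_eq_of_swap_left [AddCommMonoid M] {p : α → α → α → M}
    (hp : ∀ a b c, p a b c = p b a c) (b : α) :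
    ∑ a, ∑ c, p a b c = ∑ b', ∑ c, p b b' c :=
  Fintype.sum_congr _ _ fun a => Fintype.sum_congr _ _ fun c => hp a b c

theorem sum_sum_last_eq_of_swaps [AddCommMonoid M] {p : α → α → α → M}
    (hleft : ∀ a b c, p a b c = p b a c) (hright : ∀ a b c, p a b c = p a c b) (c : α) :
    ∑ a, ∑ b, p a b c = ∑ a, ∑ b, p c a b :=
  Fintype.sum_congr _ _ fun a => Fintype.sum_congr _ _ fun b => by
    rw [hright, hleft]

end Marginals

theorem mul_sqrt_one_div_cube {x : ℝ} (hx : 0 ≤ x) :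
    x * √(1 / x * (1 / x) * (1 / x)) = 1 / √x := by
  rw [Real.sqrt_mul (by positivity), Real.sqrt_mul_self (by positivity), one_div x,
    Real.sqrt_inv]
  rcases hx.eq_or_lt with rfl | _
  · simp
  · field_simp

theorem stmt_2_general (N : ℕ) (p : Fin N → Fin N → Fin N → ℝ)
    (hsum : ∑ a : Fin N, ∑ b : Fin N, ∑ c : Fin N, p a b c = 1)
    (hparty : ∀ a b c, p a b c = p b a c ∧ p a b c = p a c b)
    (houtcome : ∀ (σ : Equiv.Perm (Fin N)) a b c, p (σ a) (σ b) (σ c) = p a b c)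
    (hfinner : ∀ a b c, p a b c ≤
      Real.sqrt ((∑ b' : Fin N, ∑ c' : Fin N, p a b' c') *
                 (∑ a' : Fin N, ∑ c' : Fin N, p a' b c') *
                 (∑ a' : Fin N, ∑ b' : Fin N, p a' b' c))) :
    (∑ k : Fin N, p k k k ≤ 1 / Real.sqrt N) ∧
    (N = 4 → ∑ k : Fin N, p k k k ≤ 1 / 2) := by
  have hA (a : Fin N) : ∑ b, ∑ c, p a b c = 1 / N := by
    simpa using eq_one_div_card_of_sum_eq_one (sum_sum_eq_of_perm_invariant houtcome) hsum a
  have hdiag (k : Fin N) : p k k k ≤ √(1 / N * (1 / N) * (1 / N)) := by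
    have h := hfinner k k k
    rwa [sum_sum_middle_eq_of_swap_left (fun a b c => (hparty a b c).1),
      sum_sum_last_eq_of_swaps (fun a b c => (hparty a b c).1) (fun a b c => (hparty a b c).2),
      hA] at h
  have hmain : ∑ k, p k k k ≤ 1 / √N :=
    calc ∑ k, p k k k ≤ ∑ _k : Fin N, √(1 / N * (1 / N) * (1 / N)) := sum_le_sum fun k _ => hdiag k
      _ = 1 / √N := by
        rw [sum_const, card_univ, Fintype.card_fin, nsmul_eq_mul,
          mul_sqrt_one_div_cube (Nat.cast_nonneg N)]
  refine ⟨hmain, ?_⟩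
  rintro rfl
  have hsqrt4 : √(4 : ℝ) = 2 := by
    rw [show (4 : ℝ) = 2 ^ 2 by norm_num, Real.sqrt_sq zero_le_two]
  simpa [hsqrt4] using hmain

/-- Finner inequality + full symmetry imply
p(A=B=C) ≤ 1/√N; in particular ≤ 1/2 for N = 4. -/
theorem stmt_2 (N : ℕ) (hN : 0 < N) (p : Fin N → Fin N → Fin N → ℝ)
    (hnn : ∀ a b c, 0 ≤ p a b c)
    (hsum : ∑ a : Fin N, ∑ b : Fin N, ∑ c : Fin N, p a b c = 1)
    (hparty : ∀ a b c, p a b c = p b a c ∧ p a b c = p a c b)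
    (houtcome : ∀ (σ : Equiv.Perm (Fin N)) a b c, p (σ a) (σ b) (σ c) = p a b c)
    (hfinner : ∀ a b c, p a b c ≤
      Real.sqrt ((∑ b' : Fin N, ∑ c' : Fin N, p a b' c') *
                 (∑ a' : Fin N, ∑ c' : Fin N, p a' b c') *
                 (∑ a' : Fin N, ∑ b' : Fin N, p a' b' c))) :
    (∑ k : Fin N, p k k k ≤ 1 / Real.sqrt N) ∧
    (N = 4 → ∑ k : Fin N, p k k k ≤ 1 / 2) :=
  stmt_2_general N p hsum hparty houtcome hfinner
end

section
/- The distribution p = (1/8)([1,1,1]+[2,2,2]+[3,3,3]+[4,4,4]+[1,4,3]+[2,3,4]+[3,2,1]+[4,1,2]) on {1,2,3,4}³ is local in the triangle network: it arises from the deterministic response functions a(β,γ), b(γ,α), c(α,β) where each party partitions [0,1]² into four quadrants (Charlie outputs 1,2,3,4 for (α,β) in [0,½]×[0,½], [0,½]×(½,1], (½,1]×[0,½], (½,1]×(½,1] respectively, and Alice, Bob analogously to realize the stated distribution). Moreover p(A=B=C) = 1/2. -/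
open MeasureTheory Set

/-- Point mass [k,l,m] on {1,2,3,4}³. -/
def pointMass (k l m a b c : Fin 4) : ℝ :=
  if a = k ∧ b = l ∧ c = m then 1 else 0

/-- The highly correlated distribution
(1/8)([1,1,1]+[2,2,2]+[3,3,3]+[4,4,4]+[1,4,3]+[2,3,4]+[3,2,1]+[4,1,2]),
with outcomes 1,2,3,4 encoded as 0,1,2,3 in `Fin 4`. -/
noncomputable def pHighCorr (a b c : Fin 4) : ℝ :=
  (1 / 8) * (pointMass 0 0 0 a b c + pointMass 1 1 1 a b c +
    pointMass 2 2 2 a b c + pointMass 3 3 3 a b c +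
    pointMass 0 3 2 a b c + pointMass 1 2 3 a b c +
    pointMass 2 1 0 a b c + pointMass 3 0 1 a b c)

/-- Alice's quadrant response function. -/
noncomputable def fAq (β γ : ℝ) : Fin 4 :=
  if β ≤ 1/2 then (if γ ≤ 1/2 then 0 else 2) else (if γ ≤ 1/2 then 3 else 1)
/-- Bob's quadrant response function. -/
noncomputable def fBq (γ α : ℝ) : Fin 4 :=
  if γ ≤ 1/2 then (if α ≤ 1/2 then 0 else 3) else (if α ≤ 1/2 then 1 else 2)
/-- Charlie's quadrant response function. -/
noncomputable def fCq (α β : ℝ) : Fin 4 :=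
  if α ≤ 1/2 then (if β ≤ 1/2 then 0 else 1) else (if β ≤ 1/2 then 2 else 3)

/-- Bit versions of the response functions. -/
def gA : Bool → Bool → Fin 4
  | false, false => 0 | false, true => 2 | true, false => 3 | true, true => 1
def gB : Bool → Bool → Fin 4
  | false, false => 0 | false, true => 3 | true, false => 1 | true, true => 2
def gC : Bool → Bool → Fin 4
  | false, false => 0 | false, true => 1 | true, false => 2 | true, true => 3

/-- The two halves of `[0,1]`. -/
def H : Bool → Set ℝ
  | false => Icc 0 (1/2)
  | true => Ioc (1/2) 1

lemma H_sub (u : Bool) : H u ⊆ Icc (0:ℝ) 1 := by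
  cases u
  · exact Icc_subset_Icc le_rfl (by norm_num)
  · exact fun x hx => ⟨by have := hx.1; linarith, hx.2⟩

lemma H_meas (u : Bool) : MeasurableSet (H u) := by
  cases u
  · exact measurableSet_Icc
  · exact measurableSet_Ioc

lemma H_vol (u : Bool) : volume (H u) = ENNReal.ofReal (1/2) := by
  cases u <;> simp [H, Real.volume_Icc, Real.volume_Ioc] <;> norm_num <;>
    rw [one_div, ENNReal.ofReal_inv_of_pos (by norm_num)] <;> simp

lemma H_disj {u u' : Bool} (h : u ≠ u') : Disjoint (H u) (H u') := by
  cases u <;> cases u' <;> simp_all [H]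
  · rw [Set.disjoint_left]; intro x hx hx'; exact absurd hx.2 (not_le.mpr hx'.1)
  · rw [Set.disjoint_left]; intro x hx hx'; exact absurd hx'.2 (not_le.mpr hx.1)

lemma oct_vol (u v w : Bool) :
    volume (H u ×ˢ H v ×ˢ H w) = ENNReal.ofReal (1/8) := by
  rw [Measure.volume_eq_prod, Measure.prod_prod, Measure.volume_eq_prod, Measure.prod_prod,
    H_vol, H_vol, H_vol]
  rw [← ENNReal.ofReal_mul (by norm_num), ← ENNReal.ofReal_mul (by norm_num)]
  norm_num

lemma oct_disj {t t' : Bool × Bool × Bool} (h : t ≠ t') :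
    Disjoint (H t.1 ×ˢ H t.2.1 ×ˢ H t.2.2) (H t'.1 ×ˢ H t'.2.1 ×ˢ H t'.2.2) := by
  obtain ⟨u, v, w⟩ := t
  obtain ⟨u', v', w'⟩ := t'
  rw [Set.disjoint_left]
  rintro ⟨x, y, z⟩ ⟨h1, h2, h3⟩ ⟨h1', h2', h3'⟩
  apply h
  have e1 : u = u' := by
    by_contra hne; exact Set.disjoint_left.mp (H_disj hne) h1 h1'
  have e2 : v = v' := by
    by_contra hne; exact Set.disjoint_left.mp (H_disj hne) h2 h2'
  have e3 : w = w' := by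
    by_contra hne; exact Set.disjoint_left.mp (H_disj hne) h3 h3'
  simp [e1, e2, e3]

set_option maxHeartbeats 1000000 in
/-- The event set decomposes into octants. -/
lemma setEq (a b c : Fin 4) :
    {x : ℝ × ℝ × ℝ | x.1 ∈ Icc (0:ℝ) 1 ∧ x.2.1 ∈ Icc (0:ℝ) 1 ∧ x.2.2 ∈ Icc (0:ℝ) 1 ∧
      fAq x.2.1 x.2.2 = a ∧ fBq x.2.2 x.1 = b ∧ fCq x.1 x.2.1 = c}
    = ⋃ t : Bool × Bool × Bool,
        if gA t.2.1 t.2.2 = a ∧ gB t.2.2 t.1 = b ∧ gC t.1 t.2.1 = c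
        then H t.1 ×ˢ H t.2.1 ×ˢ H t.2.2 else ∅ := by
  ext ⟨α, β, γ⟩
  simp only [mem_setOf_eq, mem_iUnion]
  constructor
  · rintro ⟨hα, hβ, hγ, ha, hb, hc⟩
    by_cases h1 : α ≤ 1/2 <;> by_cases h2 : β ≤ 1/2 <;> by_cases h3 : γ ≤ 1/2 <;>
      simp only [fAq, fBq, fCq, h1, h2, h3, if_true, if_false, if_pos, if_neg,
        not_false_iff] at ha hb hc <;> subst ha <;> subst hb <;> subst hc
    · exact ⟨(false, false, false), by
        simp only [gA, gB, gC, if_pos, and_self, if_true]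
        exact ⟨⟨hα.1, h1⟩, ⟨hβ.1, h2⟩, hγ.1, h3⟩⟩
    · exact ⟨(false, false, true), by
        simp only [gA, gB, gC, if_pos, and_self, if_true]
        exact ⟨⟨hα.1, h1⟩, ⟨hβ.1, h2⟩, not_le.mp h3, hγ.2⟩⟩
    · exact ⟨(false, true, false), by
        simp only [gA, gB, gC, if_pos, and_self, if_true]
        exact ⟨⟨hα.1, h1⟩, ⟨not_le.mp h2, hβ.2⟩, hγ.1, h3⟩⟩
    · exact ⟨(false, true, true), by
        simp only [gA, gB, gC, if_pos, and_self, if_true]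
        exact ⟨⟨hα.1, h1⟩, ⟨not_le.mp h2, hβ.2⟩, not_le.mp h3, hγ.2⟩⟩
    · exact ⟨(true, false, false), by
        simp only [gA, gB, gC, if_pos, and_self, if_true]
        exact ⟨⟨not_le.mp h1, hα.2⟩, ⟨hβ.1, h2⟩, hγ.1, h3⟩⟩
    · exact ⟨(true, false, true), by
        simp only [gA, gB, gC, if_pos, and_self, if_true]
        exact ⟨⟨not_le.mp h1, hα.2⟩, ⟨hβ.1, h2⟩, not_le.mp h3, hγ.2⟩⟩
    · exact ⟨(true, true, false), by
        simp only [gA, gB, gC, if_pos, and_self, if_true]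
        exact ⟨⟨not_le.mp h1, hα.2⟩, ⟨not_le.mp h2, hβ.2⟩, hγ.1, h3⟩⟩
    · exact ⟨(true, true, true), by
        simp only [gA, gB, gC, if_pos, and_self, if_true]
        exact ⟨⟨not_le.mp h1, hα.2⟩, ⟨not_le.mp h2, hβ.2⟩, not_le.mp h3, hγ.2⟩⟩
  · rintro ⟨⟨u, v, w⟩, ht⟩
    by_cases hcompat : gA v w = a ∧ gB w u = b ∧ gC u v = c
    · rw [if_pos hcompat] at ht
      obtain ⟨h1, h2, h3⟩ := ht
      obtain ⟨ha, hb, hc⟩ := hcompat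
      refine ⟨H_sub u h1, H_sub v h2, H_sub w h3, ?_, ?_, ?_⟩ <;>
        subst ha <;> subst hb <;> subst hc <;>
        cases u <;> cases v <;> cases w <;>
        simp only [H, mem_Icc, mem_Ioc] at h1 h2 h3 <;>
        simp only [fAq, fBq, fCq, gA, gB, gC] <;>
        (split_ifs <;>
          first
            | rfl
            | (exfalso; linarith [h1.1, h1.2, h2.1, h2.2, h3.1, h3.2]))
    · rw [if_neg hcompat] at ht; exact absurd ht (notMem_empty _)

lemma vol_event (a b c : Fin 4) :
    volume {x : ℝ × ℝ × ℝ | x.1 ∈ Icc (0:ℝ) 1 ∧ x.2.1 ∈ Icc (0:ℝ) 1 ∧ x.2.2 ∈ Icc (0:ℝ) 1 ∧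
      fAq x.2.1 x.2.2 = a ∧ fBq x.2.2 x.1 = b ∧ fCq x.1 x.2.1 = c}
    = ∑ t : Bool × Bool × Bool,
        if gA t.2.1 t.2.2 = a ∧ gB t.2.2 t.1 = b ∧ gC t.1 t.2.1 = c
        then ENNReal.ofReal (1/8) else 0 := by
  rw [setEq a b c]
  rw [measure_iUnion ?_ ?_]
  · rw [tsum_fintype]
    congr 1
    ext t
    split_ifs
    · exact oct_vol _ _ _
    · simp
  · intro t t' hne
    dsimp only [Function.onFun]
    split_ifs
    · exact oct_disj hne
    all_goals simp
  · intro t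
    split_ifs
    · exact ((H_meas _).prod ((H_meas _).prod (H_meas _)))
    · exact MeasurableSet.empty

set_option maxHeartbeats 2000000 in
/-- `pHighCorr` is local in the triangle network, realized by
deterministic quadrant response functions (Charlie's is the explicit quadrant
function), and p(A=B=C) = 1/2. -/
theorem stmt_5 :
    (∃ fA fB fC : ℝ → ℝ → Fin 4,
      (∀ α β : ℝ, α ∈ Set.Icc (0:ℝ) 1 → β ∈ Set.Icc (0:ℝ) 1 →
        fC α β = if α ≤ 1 / 2 then (if β ≤ 1 / 2 then 0 else 1)
                 else (if β ≤ 1 / 2 then 2 else 3)) ∧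
      (∀ a b c : Fin 4, pHighCorr a b c =
        (volume {x : ℝ × ℝ × ℝ |
          x.1 ∈ Set.Icc (0:ℝ) 1 ∧ x.2.1 ∈ Set.Icc (0:ℝ) 1 ∧
          x.2.2 ∈ Set.Icc (0:ℝ) 1 ∧
          fA x.2.1 x.2.2 = a ∧ fB x.2.2 x.1 = b ∧ fC x.1 x.2.1 = c}).toReal)) ∧
    (∑ k : Fin 4, pHighCorr k k k = 1 / 2) := by
  constructor
  · refine ⟨fAq, fBq, fCq, fun α β _ _ => rfl, fun a b c => ?_⟩
    rw [vol_event a b c, ENNReal.toReal_sum (fun t _ => by split_ifs <;> simp)]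
    have hterm : ∀ t : Bool × Bool × Bool,
        ((if gA t.2.1 t.2.2 = a ∧ gB t.2.2 t.1 = b ∧ gC t.1 t.2.1 = c
          then ENNReal.ofReal (1/8) else 0)).toReal
        = (if gA t.2.1 t.2.2 = a ∧ gB t.2.2 t.1 = b ∧ gC t.1 t.2.1 = c
          then (1/8 : ℝ) else 0) := by
      intro t
      split_ifs
      · exact ENNReal.toReal_ofReal (by norm_num)
      · simp
    rw [Finset.sum_congr rfl (fun t _ => hterm t)]
    fin_cases a <;> fin_cases b <;> fin_cases c <;>
      simp only [Fintype.sum_prod_type, Fintype.sum_bool, gA, gB, gC, pHighCorr, pointMass,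
        Fin.isValue] <;>
      norm_num [Fin.ext_iff] <;> simp (config := { decide := true })
  · simp only [pHighCorr, pointMass, Fin.sum_univ_four, Fin.isValue]
    norm_num [Fin.ext_iff] <;> simp (config := { decide := true }) <;> norm_num
end

section
/- For every N ≥ 3 and ν ∈ [0,1/3], setting q = ν/(1−ν), the distribution on {1,...,N}³ defined for distinct k,l,m by p(k,k,k)=1/N², p(k,k,l)=ν/N², p(k,l,k)=p(l,k,k)=q(1−ν)/N², p(k,l,m)=(1−ν)(1−2q)/(N²(N−2)) is a fully symmetric probability distribution with (s111, s112, s123) = (1/N, 3ν(N−1)/N, (1−3ν)(N−1)/N). -/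
/-- The N-outcome generalization of the maximally correlated
symmetric strategy yields a fully symmetric probability distribution with
(s111, s112, s123) = (1/N, 3ν(N−1)/N, (1−3ν)(N−1)/N). -/
theorem stmt_15 (N : ℕ) (hN : 3 ≤ N) (ν : ℝ) (hν : ν ∈ Set.Icc (0:ℝ) (1/3))
    (q : ℝ) (hq : q = ν / (1 - ν))
    (p : Fin N → Fin N → Fin N → ℝ)
    (hdiag : ∀ k : Fin N, p k k k = 1 / (N : ℝ) ^ 2)
    (hkkl : ∀ k l : Fin N, k ≠ l → p k k l = ν / (N : ℝ) ^ 2)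
    (hklk : ∀ k l : Fin N, k ≠ l → p k l k = q * (1 - ν) / (N : ℝ) ^ 2)
    (hlkk : ∀ k l : Fin N, k ≠ l → p l k k = q * (1 - ν) / (N : ℝ) ^ 2)
    (hklm : ∀ k l m : Fin N, k ≠ l → l ≠ m → k ≠ m →
      p k l m = (1 - ν) * (1 - 2 * q) / ((N : ℝ) ^ 2 * ((N : ℝ) - 2))) :
    (∀ a b c, 0 ≤ p a b c) ∧
    (∑ a : Fin N, ∑ b : Fin N, ∑ c : Fin N, p a b c = 1) ∧
    (∀ a b c, p a b c = p b a c ∧ p a b c = p a c b) ∧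
    (∀ (σ : Equiv.Perm (Fin N)) a b c, p (σ a) (σ b) (σ c) = p a b c) ∧
    (∀ k : Fin N, (N : ℝ) * p k k k = 1 / N) ∧
    (∀ k l : Fin N, k ≠ l →
      3 * (N : ℝ) * ((N : ℝ) - 1) * p k k l = 3 * ν * ((N : ℝ) - 1) / N) ∧
    (∀ k l m : Fin N, k ≠ l → l ≠ m → k ≠ m →
      (N : ℝ) * ((N : ℝ) - 1) * ((N : ℝ) - 2) * p k l m =
        (1 - 3 * ν) * ((N : ℝ) - 1) / N) := by
  obtain ⟨hν0, hν3⟩ := hν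
  have hν1 : (0:ℝ) < 1 - ν := by linarith
  have hq1 : q * (1 - ν) = ν := by rw [hq]; field_simp
  have hq2 : (1 - ν) * (1 - 2 * q) = 1 - 3 * ν := by
    rw [hq]; field_simp; ring
  have hNR : (3:ℝ) ≤ (N:ℝ) := by exact_mod_cast hN
  have hN0 : (0:ℝ) < (N:ℝ) := by linarith
  have hN2 : (0:ℝ) < (N:ℝ) - 2 := by linarith
  have hNne : (N:ℝ) ≠ 0 := ne_of_gt hN0
  have hN2ne : (N:ℝ) - 2 ≠ 0 := ne_of_gt hN2
  -- master case description
  have hp : ∀ a b c : Fin N, p a b c =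
      if a = b then (if b = c then 1 / (N:ℝ)^2 else ν / (N:ℝ)^2)
      else (if b = c then ν / (N:ℝ)^2 else
        (if a = c then ν / (N:ℝ)^2
         else (1 - 3*ν) / ((N:ℝ)^2 * ((N:ℝ) - 2)))) := by
    intro a b c
    by_cases hab : a = b
    · by_cases hbc : b = c
      · subst hab; subst hbc; simp [hdiag a]
      · subst hab
        simp [hbc, hkkl a c hbc]
    · by_cases hbc : b = c
      · subst hbc
        simp [hab, hlkk b a (Ne.symm hab), hq1]
      · by_cases hac : a = c
        · subst hac
          simp [hab, hbc, hklk a b hab, hq1]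
        · simp [hab, hbc, hac, hklm a b c hab hbc hac, hq2]
  refine ⟨?_, ?_, ?_, ?_, ?_, ?_, ?_⟩
  · -- nonnegativity
    intro a b c
    rw [hp]
    have h1 : (0:ℝ) ≤ 1 / (N:ℝ)^2 := by positivity
    have h2 : (0:ℝ) ≤ ν / (N:ℝ)^2 := by positivity
    have h3 : (0:ℝ) ≤ (1 - 3*ν) / ((N:ℝ)^2 * ((N:ℝ) - 2)) := by
      apply div_nonneg (by linarith) (by positivity)
    split_ifs <;> assumption
  · -- normalization
    have cardN : (Finset.univ : Finset (Fin N)).card = N := by simp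
    have key : ∀ a b : Fin N, ∑ c : Fin N, p a b c =
        if a = b then (1 + ((N:ℝ)-1) * ν) / (N:ℝ)^2 else (1 - ν) / (N:ℝ)^2 := by
      intro a b
      by_cases hab : a = b
      · subst hab
        rw [← Finset.add_sum_erase _ _ (Finset.mem_univ a)]
        have h1 : ∑ c ∈ Finset.univ.erase a, p a a c =
            ∑ c ∈ Finset.univ.erase a, ν / (N:ℝ)^2 := by
          apply Finset.sum_congr rfl
          intro c hc
          exact hkkl a c (Ne.symm (Finset.ne_of_mem_erase hc))
        rw [h1, Finset.sum_const, Finset.card_erase_of_mem (Finset.mem_univ _), cardN,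
          hdiag a, nsmul_eq_mul]
        have : ((N - 1 : ℕ) : ℝ) = (N:ℝ) - 1 := by
          push_cast [Nat.cast_sub (by omega : 1 ≤ N)]; ring
        rw [this]
        rw [if_pos rfl]
        field_simp
      · rw [← Finset.add_sum_erase _ _ (Finset.mem_univ a)]
        have hbmem : b ∈ Finset.univ.erase a := by
          simp [Ne.symm hab]
        rw [← Finset.add_sum_erase _ _ hbmem]
        have h1 : ∑ c ∈ (Finset.univ.erase a).erase b, p a b c =
            ∑ c ∈ (Finset.univ.erase a).erase b, (1 - 3*ν) / ((N:ℝ)^2 * ((N:ℝ)-2)) := by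
          apply Finset.sum_congr rfl
          intro c hc
          have hcb : c ≠ b := Finset.ne_of_mem_erase hc
          have hca : c ≠ a := Finset.ne_of_mem_erase (Finset.mem_of_mem_erase hc)
          rw [hklm a b c hab (Ne.symm hcb) (Ne.symm hca), hq2]
        rw [h1, Finset.sum_const, Finset.card_erase_of_mem hbmem,
          Finset.card_erase_of_mem (Finset.mem_univ _), cardN, nsmul_eq_mul]
        have hc2 : ((N - 1 - 1 : ℕ) : ℝ) = (N:ℝ) - 2 := by
          push_cast [Nat.cast_sub (by omega : 1 ≤ N - 1), Nat.cast_sub (by omega : 1 ≤ N)]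
          ring
        rw [hc2, hklk a b hab, hlkk b a (Ne.symm hab), hq1]
        simp only [if_neg hab]
        field_simp
        ring
    have key2 : ∀ a : Fin N, ∑ b : Fin N, ∑ c : Fin N, p a b c = 1 / (N:ℝ) := by
      intro a
      have h1 : ∑ b : Fin N, ∑ c : Fin N, p a b c =
          ∑ b : Fin N, (if a = b then (1 + ((N:ℝ)-1) * ν) / (N:ℝ)^2
            else (1 - ν) / (N:ℝ)^2) :=
        Finset.sum_congr rfl (fun b _ => key a b)
      rw [h1, ← Finset.add_sum_erase _ _ (Finset.mem_univ a)]
      have h2 : ∑ b ∈ Finset.univ.erase a,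
          (if a = b then (1 + ((N:ℝ)-1) * ν) / (N:ℝ)^2 else (1 - ν) / (N:ℝ)^2) =
          ∑ b ∈ Finset.univ.erase a, (1 - ν) / (N:ℝ)^2 := by
        apply Finset.sum_congr rfl
        intro b hb
        rw [if_neg (Ne.symm (Finset.ne_of_mem_erase hb))]
      rw [h2, Finset.sum_const, Finset.card_erase_of_mem (Finset.mem_univ _), cardN,
        nsmul_eq_mul, if_pos rfl]
      have : ((N - 1 : ℕ) : ℝ) = (N:ℝ) - 1 := by
        push_cast [Nat.cast_sub (by omega : 1 ≤ N)]; ring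
      rw [this]
      field_simp; ring
    rw [Finset.sum_congr rfl (fun a _ => key2 a), Finset.sum_const, cardN, nsmul_eq_mul]
    field_simp
  · -- pairwise symmetry
    intro a b c
    clear hν0 hν3 hν1 hNR hN0 hN2
    constructor
    · rw [hp, hp]
      clear hp hdiag hkkl hklk hlkk hklm hq hq1 hq2
      split_ifs <;> first | rfl | (exfalso; subst_vars; simp_all)
    · rw [hp, hp]
      clear hp hdiag hkkl hklk hlkk hklm hq hq1 hq2
      split_ifs <;> first | rfl | (exfalso; subst_vars; simp_all)
  · -- permutation invariance
    intro σ a b c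
    rw [hp, hp]
    simp only [EmbeddingLike.apply_eq_iff_eq]
  · intro k
    rw [hdiag k]
    field_simp
  · intro k l hkl
    rw [hkkl k l hkl]
    field_simp
  · intro k l m hkl hlm hkm
    rw [hklm k l m hkl hlm hkm, hq2]
    field_simp
end

section
/- Consider a discrete triangle local model for 3 outcomes (colors R,G,B) with deterministic response functions a(β,γ), b(γ,α), c(α,β), whose output distribution has no event with exactly two equal outcomes (s112 = 0). Then for any fixed α₀, β₀, γ₀ with a(β₀,γ₀)=b(γ₀,α₀)=c(α₀,β₀)=R, and any γ', the value of b(γ',α₀) is determined by a(β₀,γ'): if a(β₀,γ')=R then b(γ',α₀)=R; if a(β₀,γ')=G then b(γ',α₀)=B; if a(β₀,γ')=B then b(γ',α₀)=G. -/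
/-! Reading the colors R, G, B as 0, 1, 2 modulo 3, a triple avoids the pattern "exactly two
equal" iff its sum vanishes. A hidden-variable triple with `c(α₀, β₀) = R` therefore forces
`b(γ', α₀) = -a(β₀, γ')`, which is the permutation R ↦ R, G ↦ B, B ↦ G. -/

/-- Exactly two of the three colors are equal. -/
def ExactlyTwoEqual (x y z : Fin 3) : Prop :=
  (x = y ∧ x ≠ z) ∨ (x = z ∧ x ≠ y) ∨ (y = z ∧ y ≠ x)

theorem not_exactlyTwoEqual_iff_add_add_eq_zero (x y z : Fin 3) :
    ¬ ExactlyTwoEqual x y z ↔ x + y + z = 0 := by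
  revert x y z
  unfold ExactlyTwoEqual
  decide

/-- In a deterministic discrete triangle model with 3 colors
(R = 0, G = 1, B = 2) and no exactly-two-equal outcome events, fixing
(α₀,β₀,γ₀) producing RRR, Bob's response b(γ',α₀) is determined by Alice's
response a(β₀,γ'): R ↦ R, G ↦ B, B ↦ G. -/
theorem stmt_18 {A B C : Type*}
    (fa : B → C → Fin 3) (fb : C → A → Fin 3) (fc : A → B → Fin 3)
    (hno112 : ∀ (α : A) (β : B) (γ : C),
      ¬ ExactlyTwoEqual (fa β γ) (fb γ α) (fc α β))
    (α₀ : A) (β₀ : B) (γ₀ : C)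
    (hR : fa β₀ γ₀ = 0 ∧ fb γ₀ α₀ = 0 ∧ fc α₀ β₀ = 0) :
    ∀ γ' : C,
      (fa β₀ γ' = 0 → fb γ' α₀ = 0) ∧
      (fa β₀ γ' = 1 → fb γ' α₀ = 2) ∧
      (fa β₀ γ' = 2 → fb γ' α₀ = 1) := by
  intro γ'
  have hsum := (not_exactlyTwoEqual_iff_add_add_eq_zero _ _ _).mp (hno112 α₀ β₀ γ')
  rw [hR.2.2, add_zero, add_eq_zero_iff_eq_neg'] at hsum
  refine ⟨fun ha => ?_, fun ha => ?_, fun ha => ?_⟩ <;> rw [hsum, ha] <;> rfl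
end

section
/- Any fully symmetric local distribution for N=3 outcomes with s112 = 0 must satisfy s111 = 1/3 (and hence s123 = 2/3): if a deterministic discrete triangle local model produces a fully symmetric distribution on {R,G,B}³ with no exactly-two-equal outcome events and with both s111 > 0 and s123 > 0, then s111 = 1/3. -/
open Finset

def law {ι X : Type*} [Fintype ι] [DecidableEq X] (w : ι → ℝ) (f : ι → X) (x : X) : ℝ :=
  ∑ i, w i * if f i = x then 1 else 0

lemma sum_law {ι X : Type*} [Fintype ι] [Fintype X] [DecidableEq X] (w : ι → ℝ) (f : ι → X) :
    ∑ x, law w f x = ∑ i, w i := by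
  simp only [law]
  rw [sum_comm]
  simp

section Convolution

variable {G : Type*} [AddCommGroup G] [Fintype G] [DecidableEq G]

def addConv (q r : G → ℝ) (x : G) : ℝ := ∑ t, q t * r (x - t)

lemma sum_sum_mul_ite_add_eq_addConv_law {B C : Type*} [Fintype B] [Fintype C]
    (wB : B → ℝ) (wC : C → ℝ) (U : B → G) (V : C → G) (x : G) :
    ∑ β, ∑ γ, wB β * wC γ * (if U β + V γ = x then 1 else 0) =
      addConv (law wB U) (law wC V) x := by
  have h (β γ) : wB β * wC γ * (if U β + V γ = x then 1 else 0) =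
      ∑ t, (wB β * if U β = t then 1 else 0) * (wC γ * if V γ = x - t then 1 else 0) := by
    rw [sum_eq_single (U β) (fun t _ ht => by simp [Ne.symm ht]) (by simp)]
    simp [eq_sub_iff_add_eq']
  simp only [h, addConv, law, sum_mul_sum]
  exact (sum_congr rfl fun _ _ => sum_comm).trans sum_comm

end Convolution

/-- `|q̂(1)|²` for the discrete Fourier transform on `ℤ/3`; `fourierNormSq_addConv` is the
convolution theorem at the nontrivial characters. -/
def fourierNormSq (q : Fin 3 → ℝ) : ℝ :=
  q 0 ^ 2 + q 1 ^ 2 + q 2 ^ 2 - q 0 * q 1 - q 1 * q 2 - q 2 * q 0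

lemma fourierNormSq_addConv (q r : Fin 3 → ℝ) :
    fourierNormSq (addConv q r) = fourierNormSq q * fourierNormSq r := by
  have h01 : (0 - 1 : Fin 3) = 2 := rfl
  have h02 : (0 - 2 : Fin 3) = 1 := rfl
  have h12 : (1 - 2 : Fin 3) = 2 := rfl
  have h21 : (2 - 1 : Fin 3) = 1 := rfl
  simp only [fourierNormSq, addConv, Fin.sum_univ_three, sub_zero, sub_self, h01, h02, h12, h21]
  ring

lemma eq_third_of_fourierNormSq_eq_zero {q : Fin 3 → ℝ} (hq : ∑ x, q x = 1)
    (h : fourierNormSq q = 0) (x : Fin 3) : q x = 1 / 3 := by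
  rw [Fin.sum_univ_three] at hq
  have hsq : (q 0 - q 1) ^ 2 + (q 1 - q 2) ^ 2 + (q 2 - q 0) ^ 2 = 0 := by
    unfold fourierNormSq at h
    linear_combination 2 * h
  have h01 : q 0 = q 1 := by
    nlinarith [sq_nonneg (q 0 - q 1), sq_nonneg (q 1 - q 2), sq_nonneg (q 2 - q 0)]
  have h12 : q 1 = q 2 := by
    nlinarith [sq_nonneg (q 0 - q 1), sq_nonneg (q 1 - q 2), sq_nonneg (q 2 - q 0)]
  fin_cases x <;> simp <;> linarith

lemma eq_third_or_eq_third_of_addConv_eq_third {q r : Fin 3 → ℝ} (hq : ∑ x, q x = 1)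
    (hr : ∑ x, r x = 1) (h : ∀ x, addConv q r x = 1 / 3) :
    (∀ x, q x = 1 / 3) ∨ (∀ x, r x = 1 / 3) := by
  have hzero : fourierNormSq q * fourierNormSq r = 0 := by
    rw [← fourierNormSq_addConv, funext h, fourierNormSq]
    ring
  rcases mul_eq_zero.mp hzero with hq0 | hr0
  · exact .inl (eq_third_of_fourierNormSq_eq_zero hq hq0)
  · exact .inr (eq_third_of_fourierNormSq_eq_zero hr hr0)

lemma sum_sum_eq_div_card_of_perm_invariant {X : Type*} [Fintype X] [DecidableEq X]
    {p : X → X → X → ℝ} (h : ∀ (σ : Equiv.Perm X) x y z, p (σ x) (σ y) (σ z) = p x y z)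
    (x : X) : ∑ y, ∑ z, p x y z = (∑ x, ∑ y, ∑ z, p x y z) / Fintype.card X := by
  have hconst (x' : X) : ∑ y, ∑ z, p x' y z = ∑ y, ∑ z, p x y z := by
    have hσ := h (Equiv.swap x x') x
    rw [Equiv.swap_apply_left] at hσ
    simp only [← hσ]
    rw [Equiv.sum_comp (Equiv.swap x x') fun y => ∑ z, p x' y (Equiv.swap x x' z)]
    simp only [Equiv.sum_comp (Equiv.swap x x') (p x' _)]
  have hcard : (Fintype.card X : ℝ) ≠ 0 := Nat.cast_ne_zero.mpr (Fintype.card_pos_iff.mpr ⟨x⟩).ne'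
  rw [sum_congr rfl fun x' _ => hconst x', sum_const, card_univ, nsmul_eq_mul,
    mul_div_cancel_left₀ _ hcard]

lemma add_add_eq_zero_of_not_exactlyTwoEqual :
    ∀ x y z : Fin 3, ¬ ExactlyTwoEqual x y z → x + y + z = 0 := by
  unfold ExactlyTwoEqual
  decide

lemma eq_and_eq_iff_eq_left_of_add_add_eq_zero :
    ∀ x y z : Fin 3, x + y + z = 0 → (x = y ∧ y = z ↔ x = y) := by
  decide

lemma eq_and_eq_iff_eq_right_of_add_add_eq_zero :
    ∀ x y z : Fin 3, x + y + z = 0 → (x = y ∧ y = z ↔ x = z) := by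
  decide

section TriangleModel

variable {A B C : Type*} [Fintype A] [Fintype B] [Fintype C]

def triangleProb (wA : A → ℝ) (wB : B → ℝ) (wC : C → ℝ) (E : A → B → C → Prop)
    [∀ α β γ, Decidable (E α β γ)] : ℝ :=
  ∑ α, ∑ β, ∑ γ, wA α * wB β * wC γ * if E α β γ then 1 else 0

variable {wA : A → ℝ} {wB : B → ℝ} {wC : C → ℝ}

lemma triangleProb_pos (hA : ∀ α, 0 ≤ wA α) (hB : ∀ β, 0 ≤ wB β) (hC : ∀ γ, 0 ≤ wC γ)
    {E : A → B → C → Prop} [∀ α β γ, Decidable (E α β γ)] {α β γ}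
    (ha : wA α ≠ 0) (hb : wB β ≠ 0) (hc : wC γ ≠ 0) (hE : E α β γ) :
    0 < triangleProb wA wB wC E := by
  have hnn (α β γ) : 0 ≤ wA α * wB β * wC γ * if E α β γ then 1 else 0 := by
    have := mul_nonneg (mul_nonneg (hA α) (hB β)) (hC γ)
    split_ifs <;> simp [this]
  refine sum_pos' (fun _ _ => sum_nonneg fun _ _ => sum_nonneg fun _ _ => hnn ..)
    ⟨α, mem_univ _, sum_pos' (fun _ _ => sum_nonneg fun _ _ => hnn ..)
      ⟨β, mem_univ _, sum_pos' (fun _ _ => hnn ..) ⟨γ, mem_univ _, ?_⟩⟩⟩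
  simp only [hE, if_true, mul_one]
  exact mul_pos (mul_pos ((hA α).lt_of_ne' ha) ((hB β).lt_of_ne' hb)) ((hC γ).lt_of_ne' hc)

lemma triangleProb_congr {E F : A → B → C → Prop} [∀ α β γ, Decidable (E α β γ)]
    [∀ α β γ, Decidable (F α β γ)]
    (h : ∀ α β γ, wA α ≠ 0 → wB β ≠ 0 → wC γ ≠ 0 → (E α β γ ↔ F α β γ)) :
    triangleProb wA wB wC E = triangleProb wA wB wC F := by
  refine sum_congr rfl fun α _ => sum_congr rfl fun β _ => sum_congr rfl fun γ _ => ?_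
  by_cases hw : wA α * wB β * wC γ = 0
  · simp [hw]
  · simp only [mul_ne_zero_iff] at hw
    rw [if_congr (h α β γ hw.1.1 hw.1.2 hw.2) rfl rfl]

lemma sum_triangleProb {X : Type*} [Fintype X] (E : X → A → B → C → Prop)
    [∀ x α β γ, Decidable (E x α β γ)] :
    ∑ x, triangleProb wA wB wC (E x) =
      ∑ α, ∑ β, ∑ γ, wA α * wB β * wC γ * ∑ x, if E x α β γ then 1 else 0 := by
  simp only [triangleProb, mul_sum]
  exact sum_comm.trans (sum_congr rfl fun _ _ => sum_comm.trans
    (sum_congr rfl fun _ _ => sum_comm))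

lemma sum_triangleProb_eq_one (hA : ∑ α, wA α = 1) (hB : ∑ β, wB β = 1) (hC : ∑ γ, wC γ = 1)
    {X : Type*} [Fintype X] [DecidableEq X] (g : A → B → C → X) :
    ∑ x, triangleProb wA wB wC (fun α β γ => g α β γ = x) = 1 := by
  simp [sum_triangleProb, ← mul_sum, hA, hB, hC]

lemma sum_triangleProb_and_eq {X : Type*} [Fintype X] [DecidableEq X] (E : A → B → C → Prop)
    [∀ α β γ, Decidable (E α β γ)] (g : A → B → C → X) :
    ∑ x, triangleProb wA wB wC (fun α β γ => E α β γ ∧ g α β γ = x) =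
      triangleProb wA wB wC E := by
  rw [sum_triangleProb]
  simp [ite_and, triangleProb]

lemma sum_triangleProb_diag {X : Type*} [Fintype X] [DecidableEq X] (f g h : A → B → C → X) :
    ∑ k, triangleProb wA wB wC (fun α β γ => f α β γ = k ∧ g α β γ = k ∧ h α β γ = k) =
      triangleProb wA wB wC (fun α β γ => f α β γ = g α β γ ∧ g α β γ = h α β γ) := by
  rw [sum_triangleProb]
  refine sum_congr rfl fun α _ => sum_congr rfl fun β _ => sum_congr rfl fun γ _ => ?_
  by_cases hfg : f α β γ = g α β γ <;> simp [ite_and, hfg, eq_comm]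

lemma triangleProb_add_eq_addConv (hA : ∑ α, wA α = 1) {G : Type*} [AddCommGroup G]
    [Fintype G] [DecidableEq G] (U : B → G) (V : C → G) (x : G) :
    triangleProb wA wB wC (fun _ β γ => U β + V γ = x) = addConv (law wB U) (law wC V) x := by
  rw [← sum_sum_mul_ite_add_eq_addConv_law]
  simp only [triangleProb, mul_assoc, ← mul_sum, ← sum_mul, hA, one_mul]

lemma triangleProb_eq_of_law_mid_const (hA : ∑ α, wA α = 1) (hC : ∑ γ, wC γ = 1)
    {X : Type*} [DecidableEq X] (U : B → X) (g : A → C → X) {c : ℝ} (hU : ∀ x, law wB U x = c) :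
    triangleProb wA wB wC (fun α β γ => U β = g α γ) = c := by
  calc _ = ∑ α, ∑ γ, wA α * wC γ * law wB U (g α γ) := by
        simp only [triangleProb, law, mul_sum]
        exact sum_congr rfl fun α _ => sum_comm.trans
          (sum_congr rfl fun γ _ => sum_congr rfl fun β _ => by ring)
    _ = c := by simp only [hU, ← sum_mul, ← sum_mul_sum, hA, hC, one_mul]

lemma triangleProb_eq_of_law_right_const (hA : ∑ α, wA α = 1) (hB : ∑ β, wB β = 1)
    {X : Type*} [DecidableEq X] (V : C → X) (g : A → B → X) {c : ℝ} (hV : ∀ x, law wC V x = c) :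
    triangleProb wA wB wC (fun α β γ => V γ = g α β) = c := by
  calc _ = ∑ α, ∑ β, wA α * wB β * law wC V (g α β) := by
        simp only [triangleProb, law, mul_sum, mul_assoc]
    _ = c := by simp only [hV, ← sum_mul, ← sum_mul_sum, hA, hB, one_mul]

variable {fa : B → C → Fin 3} {fb : C → A → Fin 3} {fc : A → B → Fin 3}

lemma add_add_eq_zero_of_triangleProb_exactlyTwoEqual_eq_zero (hA : ∀ α, 0 ≤ wA α)
    (hB : ∀ β, 0 ≤ wB β) (hC : ∀ γ, 0 ≤ wC γ)
    (h : ∀ x y z, ExactlyTwoEqual x y z →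
      triangleProb wA wB wC (fun α β γ => fa β γ = x ∧ fb γ α = y ∧ fc α β = z) = 0)
    {α β γ} (ha : wA α ≠ 0) (hb : wB β ≠ 0) (hc : wC γ ≠ 0) :
    fa β γ + fb γ α + fc α β = 0 := by
  refine add_add_eq_zero_of_not_exactlyTwoEqual _ _ _ fun hE => ?_
  have hpos := triangleProb_pos hA hB hC ha hb hc (E := fun α' β' γ' =>
    fa β' γ' = fa β γ ∧ fb γ' α' = fb γ α ∧ fc α' β' = fc α β) ⟨rfl, rfl, rfl⟩
  exact (h _ _ _ hE ▸ hpos).false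

lemma triangleProb_eq_and_eq_eq_third (hA : ∑ α, wA α = 1) (hB : ∑ β, wB β = 1)
    (hC : ∑ γ, wC γ = 1)
    (hsum : ∀ α β γ, wA α ≠ 0 → wB β ≠ 0 → wC γ ≠ 0 → fa β γ + fb γ α + fc α β = 0)
    (hunif : ∀ x, triangleProb wA wB wC (fun _ β γ => fa β γ = x) = 1 / 3) :
    triangleProb wA wB wC (fun α β γ => fa β γ = fb γ α ∧ fb γ α = fc α β) = 1 / 3 := by
  obtain ⟨α₀, -, hα₀⟩ := exists_ne_zero_of_sum_ne_zero (hA ▸ one_ne_zero : ∑ α, wA α ≠ 0)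
  set U : B → Fin 3 := fun β => -fc α₀ β
  set V : C → Fin 3 := fun γ => -fb γ α₀
  have hfa β γ (hb : wB β ≠ 0) (hc : wC γ ≠ 0) : fa β γ = U β + V γ := by
    rw [← sub_eq_zero, ← hsum α₀ β γ hα₀ hb hc]
    show fa β γ - (-fc α₀ β + -fb γ α₀) = _
    abel
  have hconv x : addConv (law wB U) (law wC V) x = 1 / 3 := by
    rw [← triangleProb_add_eq_addConv hA, ← hunif x]
    exact triangleProb_congr fun _ β γ _ hb hc => by rw [hfa β γ hb hc]
  rcases eq_third_or_eq_third_of_addConv_eq_third ((sum_law _ _).trans hB)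
    ((sum_law _ _).trans hC) hconv with hU | hV
  · rw [triangleProb_congr (F := fun α β γ => U β = fb γ α - V γ)]
    · exact triangleProb_eq_of_law_mid_const hA hC _ _ hU
    intro α β γ ha hb hc
    rw [eq_and_eq_iff_eq_left_of_add_add_eq_zero _ _ _ (hsum α β γ ha hb hc), hfa β γ hb hc,
      eq_sub_iff_add_eq]
  · rw [triangleProb_congr (F := fun α β γ => V γ = fc α β - U β)]
    · exact triangleProb_eq_of_law_right_const hA hB _ _ hV
    intro α β γ ha hb hc
    rw [eq_and_eq_iff_eq_right_of_add_add_eq_zero _ _ _ (hsum α β γ ha hb hc), hfa β γ hb hc,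
      eq_sub_iff_add_eq']

end TriangleModel

theorem stmt_19_general {A B C : Type*} [Fintype A] [Fintype B] [Fintype C]
    (wA : A → ℝ) (wB : B → ℝ) (wC : C → ℝ)
    (hwA : (∀ α, 0 ≤ wA α) ∧ ∑ α, wA α = 1)
    (hwB : (∀ β, 0 ≤ wB β) ∧ ∑ β, wB β = 1)
    (hwC : (∀ γ, 0 ≤ wC γ) ∧ ∑ γ, wC γ = 1)
    (fa : B → C → Fin 3) (fb : C → A → Fin 3) (fc : A → B → Fin 3)
    (p : Fin 3 → Fin 3 → Fin 3 → ℝ)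
    (hp : ∀ x y z, p x y z = ∑ α, ∑ β, ∑ γ,
      wA α * wB β * wC γ *
        (if fa β γ = x ∧ fb γ α = y ∧ fc α β = z then 1 else 0))
    (houtcome : ∀ (σ : Equiv.Perm (Fin 3)) x y z, p (σ x) (σ y) (σ z) = p x y z)
    (hs112 : ∀ x y z, ExactlyTwoEqual x y z → p x y z = 0) :
    ∑ k : Fin 3, p k k k = 1 / 3 := by
  obtain ⟨hA0, hA⟩ := hwA
  obtain ⟨hB0, hB⟩ := hwB
  obtain ⟨hC0, hC⟩ := hwC
  replace hp : ∀ x y z, p x y z = triangleProb wA wB wC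
      (fun α β γ => fa β γ = x ∧ fb γ α = y ∧ fc α β = z) := hp
  have hsum : ∀ α β γ, wA α ≠ 0 → wB β ≠ 0 → wC γ ≠ 0 → fa β γ + fb γ α + fc α β = 0 :=
    fun _ _ _ => add_add_eq_zero_of_triangleProb_exactlyTwoEqual_eq_zero hA0 hB0 hC0
      fun x y z hE => hp x y z ▸ hs112 x y z hE
  have htot : ∑ x, ∑ y, ∑ z, p x y z = 1 := by
    simp only [hp, ← and_assoc, sum_triangleProb_and_eq]
    exact sum_triangleProb_eq_one hA hB hC _
  have hunif x : triangleProb wA wB wC (fun _ β γ => fa β γ = x) = 1 / 3 := by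
    calc _ = ∑ y, ∑ z, p x y z := by simp only [hp, ← and_assoc, sum_triangleProb_and_eq]
      _ = 1 / 3 := by rw [sum_sum_eq_div_card_of_perm_invariant houtcome, htot]; norm_num
  simp only [hp, sum_triangleProb_diag]
  exact triangleProb_eq_and_eq_eq_third hA hB hC hsum hunif

/-- A deterministic discrete triangle local model for 3 outcomes
whose output distribution is fully symmetric, has no exactly-two-equal events
(s112 = 0), and has s111 > 0 and s123 > 0, must satisfy s111 = 1/3. -/
theorem stmt_19 {A B C : Type*} [Fintype A] [Fintype B] [Fintype C]
    (wA : A → ℝ) (wB : B → ℝ) (wC : C → ℝ)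
    (hwA : (∀ α, 0 ≤ wA α) ∧ ∑ α, wA α = 1)
    (hwB : (∀ β, 0 ≤ wB β) ∧ ∑ β, wB β = 1)
    (hwC : (∀ γ, 0 ≤ wC γ) ∧ ∑ γ, wC γ = 1)
    (fa : B → C → Fin 3) (fb : C → A → Fin 3) (fc : A → B → Fin 3)
    (p : Fin 3 → Fin 3 → Fin 3 → ℝ)
    (hp : ∀ x y z, p x y z = ∑ α, ∑ β, ∑ γ,
      wA α * wB β * wC γ *
        (if fa β γ = x ∧ fb γ α = y ∧ fc α β = z then 1 else 0))
    (hparty : ∀ x y z, p x y z = p y x z ∧ p x y z = p x z y)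
    (houtcome : ∀ (σ : Equiv.Perm (Fin 3)) x y z, p (σ x) (σ y) (σ z) = p x y z)
    (hs112 : ∀ x y z, ExactlyTwoEqual x y z → p x y z = 0)
    (hs111 : 0 < ∑ k : Fin 3, p k k k)
    (hs123 : 0 < ∑ x : Fin 3, ∑ y : Fin 3, ∑ z : Fin 3,
      (if x ≠ y ∧ y ≠ z ∧ x ≠ z then p x y z else 0)) :
    ∑ k : Fin 3, p k k k = 1 / 3 :=
  stmt_19_general wA wB wC hwA hwB hwC fa fb fc p hp houtcome hs112
end
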